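/- arXiv:1405.3069 — 2 statements merged into one kernel-verified Lean document; each statement's English description precedes it below -/
import Mathlib

section
/- Let G = (Ξ, Σ, Δ) be a grammar in 2-normal form, b = w_1* … w_d* a bounded expression over Σ, and let G^∩, G^⋈ and the map ι : Δ^∩ → Δ^⋈ be as defined. For each production p ∈ Δ^⋈, the preimage ι^{−1}(p) ⊆ Δ^∩ is a singleton. -/
namespace Paper

/-- A word over nonterminals `N` and terminals `T`. -/
abbrev Word (N T : Type) := List (N ⊕ T)

/-- A production of a grammar. -/
abbrev CProd (N T : Type) := N × Word N T

/-- A grammar, given by its set of productions. -/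
structure CFG (N T : Type) where
  prods : Set (CProd N T)

variable {N T : Type}

/-- number of occurrences of nonterminals in a word -/
def ntCount (u : Word N T) : ℕ := (u.filter (fun s => s.isLeft)).length

/-- number of occurrences of terminals in a word -/
def tCount (u : Word N T) : ℕ := (u.filter (fun s => s.isRight)).length

/-- the result of applying production `p` at position `j` of `u` -/
def applyProd (p : CProd N T) (j : ℕ) (u : Word N T) : Word N T :=
  u.take j ++ p.2 ++ u.drop (j + 1)

/-- `KSeq G k u γjs v`: a step sequence from `u` to `v` applying the indicated
productions at the indicated positions, in which every word (including `u`, `v`)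
has at most `k` occurrences of nonterminals (`k = ⊤` places no restriction). -/
inductive KSeq (G : CFG N T) (k : ℕ∞) : Word N T → List (CProd N T × ℕ) → Word N T → Prop
  | refl (u : Word N T) : (ntCount u : ℕ∞) ≤ k → KSeq G k u [] u
  | step {u v : Word N T} {p : CProd N T} {j : ℕ} {rest : List (CProd N T × ℕ)} :
      (ntCount u : ℕ∞) ≤ k → p ∈ G.prods → u[j]? = some (Sum.inl p.1) →
      KSeq G k (applyProd p j u) rest v → KSeq G k u ((p, j) :: rest) v

/-- words annotated with the index of the step at which each symbol occurrence appeared -/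
abbrev AWord (N T : Type) := List ((N ⊕ T) × ℕ)

def strip (u : AWord N T) : Word N T := u.map Prod.fst

def ntCountA (u : AWord N T) : ℕ := (u.filter (fun s => s.1.isLeft)).length

def applyProdA (p : CProd N T) (j m : ℕ) (u : AWord N T) : AWord N T :=
  u.take j ++ p.2.map (fun s => (s, m)) ++ u.drop (j + 1)

/-- the depth-first condition: position `j` carries a maximal first-appearance
index among the nonterminal occurrences of `u` -/
def dfOK (u : AWord N T) (j : ℕ) : Prop :=
  ∀ i x o, u[(i : ℕ)]? = some (Sum.inl x, o) → ∀ s oj, u[j]? = some (s, oj) → o ≤ oj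

/-- `DFSeq G k m u γjs v`: a `k`-index depth-first step sequence on annotated words,
where `m` is the index (in the whole sequence) of the current word `u`. -/
inductive DFSeq (G : CFG N T) (k : ℕ∞) : ℕ → AWord N T → List (CProd N T × ℕ) → AWord N T → Prop
  | refl (m : ℕ) (u : AWord N T) : (ntCountA u : ℕ∞) ≤ k → DFSeq G k m u [] u
  | step {m : ℕ} {u v : AWord N T} {p : CProd N T} {j o : ℕ} {rest : List (CProd N T × ℕ)} :
      (ntCountA u : ℕ∞) ≤ k → p ∈ G.prods → u[j]? = some (Sum.inl p.1, o) →
      dfOK u j →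
      DFSeq G k (m + 1) (applyProdA p j (m + 1) u) rest v →
      DFSeq G k m u ((p, j) :: rest) v

/-- `u ⇒^γ v` by a `k`-index step sequence (positions existentially quantified). -/
def CtrlSeq (G : CFG N T) (k : ℕ∞) (u : Word N T) (γ : List (CProd N T)) (v : Word N T) : Prop :=
  ∃ js : List ℕ, js.length = γ.length ∧ KSeq G k u (γ.zip js) v

/-- annotate a word as an initial word of a step sequence -/
def annot (u : Word N T) : AWord N T := u.map (fun s => (s, 0))

/-- `u ⇒^γ v` by a `k`-index depth-first step sequence starting at `u`. -/
def DFCtrlFrom (G : CFG N T) (k : ℕ∞) (u : Word N T) (γ : List (CProd N T)) (v : Word N T) :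
    Prop :=
  ∃ (js : List ℕ) (va : AWord N T),
    js.length = γ.length ∧ DFSeq G k 0 (annot u) (γ.zip js) va ∧ strip va = v

/-- embedding of terminal words -/
def tw (w : List T) : Word N T := w.map Sum.inr

/-- the sentential word `u Y v` where `u, v` are terminal and `Y` is an optional nonterminal -/
def sent (u : List T) (Y : Option N) (v : List T) : Word N T :=
  tw u ++ (Y.elim [] (fun y => [Sum.inl y])) ++ tw v

/-- `L^{(k)}_{X,Y}(G) = { u·v | X ⇒* u Y v by a k-index step sequence }`;
`Y = none` stands for `ε`. -/
def LKY (G : CFG N T) (k : ℕ∞) (X : N) (Y : Option N) : Set (List T) :=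
  {w | ∃ u v γ, w = u ++ v ∧ CtrlSeq G k [Sum.inl X] γ (sent u Y v)}

/-- `L_X(G)` -/
def Lang (G : CFG N T) (X : N) : Set (List T) := LKY G ⊤ X none

/-- `L^{(k)}_X(G)` -/
def LangK (G : CFG N T) (k : ℕ) (X : N) : Set (List T) := LKY G (k : ℕ∞) X none

/-- `Γ^{df(k)}_{X,Y}(G)`: control words of `k`-index depth-first step sequences `X ⇒^γ u Y v`. -/
def GammaDF (G : CFG N T) (k : ℕ) (X : N) (Y : Option N) : Set (List (CProd N T)) :=
  {γ | ∃ u v : List T, DFCtrlFrom G (k : ℕ∞) [Sum.inl X] γ (sent u Y v)}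

/-- `L̂_{X,Y}(Γ, G)` -/
def LHat (G : CFG N T) (Γ : Set (List (CProd N T))) (X : N) (Y : Option N) : Set (List T) :=
  {w | ∃ u v, w = u ++ v ∧ ∃ γ ∈ Γ, CtrlSeq G ⊤ [Sum.inl X] γ (sent u Y v)}

/-- the language of the bounded expression `w₁* ⋯ w_d*` -/
def BLang {α : Type} : List (List α) → Set (List α)
  | [] => {[]}
  | w :: ws => {u | ∃ (n : ℕ) (v : List α), v ∈ BLang ws ∧ u = (List.replicate n w).flatten ++ v}

/-- the words of a bounded expression must be nonempty -/
def IsBExpr {α : Type} (ws : List (List α)) : Prop := ∀ w ∈ ws, w ≠ []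

/-- the language of the letter-bounded expression `a₁* ⋯ a_d*` -/
def letterLang {α : Type} (as : List α) : Set (List α) := BLang (as.map (fun a => [a]))

/-- the language `a_i* ⋯ a_j*` (0-indexed segment of `as` from `i` to `j` inclusive) -/
def segLang {α : Type} (as : List α) (i j : ℕ) : Set (List α) :=
  letterLang ((as.drop i).take (j - i + 1))

end Paper

namespace Paper

variable {N T : Type}

/-- ranked words over the nonterminals -/
abbrev RW (N : Type) := List (N × ℕ)

/-- the set of rank values is downward closed (equivalently, of the form `{0, …, m}`
when nonempty) -/
def contiguousRanks (q : RW N) : Prop := ∀ p ∈ q, ∀ j ≤ p.2, ∃ x : N, (x, j) ∈ q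

/-- vertices of the graph `A^{df(k)}_G` -/
def IsVertex (k : ℕ) (q : RW N) : Prop :=
  q.length ≤ k ∧ contiguousRanks q ∧ List.Pairwise (· ≤ ·) (q.map Prod.snd)

/-- `w↓Ξ` : projection of a word to its nonterminals -/
def ntProj (w : Word N T) : List N := w.filterMap Sum.getLeft?

open Classical in
/-- the rank given to the nonterminals produced by a step rewriting a nonterminal
of maximal rank `i`, where `uv` is the rest of the ranked word -/
noncomputable def newRank (uv : RW N) (i : ℕ) : ℕ :=
  if uv = [] then 0 else if ∀ p ∈ uv, p.2 ≠ i then i else i + 1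

/-- the edge relation of the graph `A^{df(k)}_G` -/
def Edge (G : CFG N T) (k : ℕ) (q : RW N) (p : CProd N T) (q' : RW N) : Prop :=
  p ∈ G.prods ∧ IsVertex k q ∧ IsVertex k q' ∧
  ∃ (u v : RW N) (i : ℕ), q = u ++ [(p.1, i)] ++ v ∧ (∀ x ∈ q, x.2 ≤ i) ∧
    q' = u ++ v ++ (ntProj p.2).map (fun X => (X, newRank (u ++ v) i))

/-- paths in a labeled graph, recording the sequence of edge labels -/
inductive GPath {V E : Type} (edge : V → E → V → Prop) : V → List E → V → Prop
  | refl (v : V) : GPath edge v [] v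
  | step {v v' v'' : V} {e : E} {es : List E} :
      edge v e v' → GPath edge v' es v'' → GPath edge v (e :: es) v''

/-- paths recording the successive vertices as well -/
inductive VPath {V E : Type} (edge : V → E → V → Prop) : V → List (E × V) → Prop
  | refl (v : V) : VPath edge v []
  | step {v v' : V} {e : E} {rest : List (E × V)} :
      edge v e v' → VPath edge v' rest → VPath edge v ((e, v') :: rest)

/-- endpoint of a path starting at `q` -/
def pend {V E : Type} (q : V) (π : List (E × V)) : V := (π.map Prod.snd).getLastD q

/-- a path is acyclic iff it visits no vertex twice -/
def AcyclicFrom {V E : Type} (q : V) (π : List (E × V)) : Prop :=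
  (q :: π.map Prod.snd).Nodup

/-- `Decomp edge q pairs fin` asserts that the path obtained by concatenating, in order,
the segments of `pairs` (each an acyclic segment followed by a cycle) and `fin` is a valid
path from `q`, alternating acyclic segments `ς_j` and cycles `θ_j`. -/
def Decomp {V E : Type} (edge : V → E → V → Prop) :
    V → List (List (E × V) × List (E × V)) → List (E × V) → Prop
  | q, [], fin => VPath edge q fin ∧ AcyclicFrom q fin
  | q, (σ, θ) :: rest, fin =>
      VPath edge q σ ∧ AcyclicFrom q σ ∧
      VPath edge (pend q σ) θ ∧ pend (pend q σ) θ = pend q σ ∧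
      Decomp edge (pend q σ) rest fin

/-- `|γ|_a`: total number of occurrences of the terminal `a` in the right-hand
sides of the productions of the control word `γ` -/
def projCnt {A : Type} [DecidableEq A] (γ : List (CProd N A)) (a : A) : ℕ :=
  ((γ.map (fun p => p.2)).flatten.filterMap Sum.getRight?).count a

/-- `proj(γ) = a₁^{|γ|_{a₁}} ⋯ a_s^{|γ|_{a_s}}` -/
def projW {A : Type} [DecidableEq A] (as : List A) (γ : List (CProd N A)) : List A :=
  (as.map (fun a => List.replicate (projCnt γ a) a)).flatten

end Paper

namespace Paper

variable {N T : Type}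

/-- a grammar is in 2-normal form -/
def TwoNF (G : CFG N T) : Prop := ∀ p ∈ G.prods, p.2.length ≤ 2

/-- states of the automaton/grammar `G^b`: `(s, i)` encodes `q^{(s+1)}_{i+1}`,
i.e. position `i` (0-indexed) inside the block `s` (0-indexed) -/
abbrev QB : Type := ℕ × ℕ

/-- `ℓ_s`: length of the `s`-th word of the bounded expression -/
def lenB (ws : List (List T)) (s : ℕ) : ℕ := (ws.getD s []).length

/-- the `i`-th letter of the `s`-th word -/
def letterB (ws : List (List T)) (s i : ℕ) : Option T := (ws.getD s [])[i]?

/-- the productions of the grammar `G^b` generating the bounded expression `b` -/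
def DeltaB (ws : List (List T)) : Set (CProd QB T) :=
  {p | (∃ s i a, s < ws.length ∧ i + 1 < lenB ws s ∧ letterB ws s i = some a ∧
          p = ((s, i), [Sum.inr a, Sum.inl (s, i + 1)]))
     ∨ (∃ s s' a, s ≤ s' ∧ s' < ws.length ∧
          letterB ws s (lenB ws s - 1) = some a ∧
          p = ((s, lenB ws s - 1), [Sum.inr a, Sum.inl (s', 0)]))
     ∨ (∃ s, s < ws.length ∧ p = ((s, 0), ([] : Word QB T)))}

/-- the grammar `G^b` -/
def GB (ws : List (List T)) : CFG QB T := ⟨DeltaB ws⟩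

/-- nonterminals `[q X q']` of the product grammar `G^∩` -/
abbrev NI (N : Type) : Type := QB × N × QB

/-- `q ∈ Ξ^b` -/
def ValidQ (ws : List (List T)) (q : QB) : Prop :=
  q.1 < ws.length ∧ q.2 < lenB ws q.1

/-- `[q X q'] ∈ Ξ^∩`: both states valid and blocks in order -/
def ValidNI (ws : List (List T)) (n : NI N) : Prop :=
  ValidQ ws n.1 ∧ ValidQ ws n.2.2 ∧ n.1.1 ≤ n.2.2.1

/-- `q ⇒* w·q'` in `G^b` -/
def DerB (ws : List (List T)) (q : QB) (w : List T) (q' : QB) : Prop :=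
  ∃ γ, CtrlSeq (GB ws) ⊤ [Sum.inl q] γ (tw w ++ [Sum.inl q'])

/-- the productions `Δ^∩` of the product grammar `G^∩` -/
def DeltaI (G : CFG N T) (ws : List (List T)) : Set (CProd (NI N) T) :=
  {pp | ∃ (q q' : QB) (X : N), ValidNI ws (q, X, q') ∧
     ((∃ w : List T, (X, tw w) ∈ G.prods ∧ DerB ws q w q' ∧
         pp = ((q, X, q'), tw w)) ∨
      (∃ Y : N, (X, [Sum.inl Y]) ∈ G.prods ∧
         pp = ((q, X, q'), [Sum.inl ((q, Y, q') : NI N)])) ∨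
      (∃ (a : T) (Y : N) (qm : QB), (X, [Sum.inr a, Sum.inl Y]) ∈ G.prods ∧
         ((q, [Sum.inr a, Sum.inl qm]) : CProd QB T) ∈ DeltaB ws ∧ ValidNI ws (qm, Y, q') ∧
         pp = ((q, X, q'), [Sum.inr a, Sum.inl ((qm, Y, q') : NI N)])) ∨
      (∃ (a : T) (Y : N) (qm : QB), (X, [Sum.inl Y, Sum.inr a]) ∈ G.prods ∧
         ((qm, [Sum.inr a, Sum.inl q']) : CProd QB T) ∈ DeltaB ws ∧ ValidNI ws (q, Y, qm) ∧
         pp = ((q, X, q'), [Sum.inl ((q, Y, qm) : NI N), Sum.inr a])) ∨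
      (∃ (Y Z : N) (qm : QB), (X, [Sum.inl Y, Sum.inl Z]) ∈ G.prods ∧
         ValidNI ws (q, Y, qm) ∧ ValidNI ws (qm, Z, q') ∧
         pp = ((q, X, q'), [Sum.inl ((q, Y, qm) : NI N), Sum.inl ((qm, Z, q') : NI N)])))}

/-- the product grammar `G^∩` -/
def GI (G : CFG N T) (ws : List (List T)) : CFG (NI N) T := ⟨DeltaI G ws⟩

/-- `ζ` on symbols -/
def zetaS : (NI N ⊕ T) → (N ⊕ T) := Sum.map (fun n => n.2.1) id

/-- `ζ` on productions -/
def zetaP (p : CProd (NI N) T) : CProd N T := (p.1.2.1, p.2.map zetaS)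

/-- `ζ` on control words -/
def zetaC (γ : List (CProd (NI N) T)) : List (CProd N T) := γ.map zetaP

/-- the intermediate state of the (unique, shortest) two-step run of `G^b` from the
left state of `h` to its right state; when the first step wraps, the least possible
intermediate block is chosen -/
noncomputable def iotaMid (ws : List (List T)) (h : NI N) (a b : T) : QB :=
  if h.1.2 + 1 < lenB ws h.1.1 then (h.1.1, h.1.2 + 1)
  else (sInf {y : ℕ | (((h.1.1, h.1.2), [Sum.inr a, Sum.inl ((y, 0) : QB)]) : CProd QB T) ∈ DeltaB ws ∧
                (((y, 0), [Sum.inr b, Sum.inl (h.2.2 : QB)]) : CProd QB T) ∈ DeltaB ws}, 0)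

/-- `ι` on right-hand sides: relabels terminals by the indices (0-indexed) of the
blocks of `b` completed by the corresponding moves of `G^b`; `h` is the head of the
production -/
noncomputable def iotaRhs (ws : List (List T)) (h : NI N) :
    Word (NI N) T → Word (NI N) ℕ
  | [] => []
  | [Sum.inr _] => if h.2.2.2 = 0 then [Sum.inr h.1.1] else []
  | [Sum.inr a, Sum.inr b] =>
      (if (iotaMid ws h a b).2 = 0 then [Sum.inr h.1.1] else []) ++
      (if h.2.2.2 = 0 then [Sum.inr (iotaMid ws h a b).1] else [])
  | [Sum.inr _, Sum.inl m] => (if m.1.2 = 0 then [Sum.inr h.1.1] else []) ++ [Sum.inl m]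
  | [Sum.inl m, Sum.inr _] => [Sum.inl m] ++ (if h.2.2.2 = 0 then [Sum.inr m.2.2.1] else [])
  | other => other.map (Sum.map id (fun _ => 0))

/-- the map `ι : Δ^∩ → Δ^⋈` -/
noncomputable def iota (ws : List (List T)) (p : CProd (NI N) T) : CProd (NI N) ℕ :=
  (p.1, iotaRhs ws p.1 p.2)

/-- the grammar `G^⋈`, whose terminals are the (0-indexed) letters `a₁, …, a_d`
represented by natural numbers -/
noncomputable def GBow (G : CFG N T) (ws : List (List T)) : CFG (NI N) ℕ :=
  ⟨iota ws '' DeltaI G ws⟩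

end Paper

namespace Paper

variable {N A : Type}

/-- `Ξ̂`: nonterminals producing some word starting with `a₁` and some word ending
with `a_d` -/
def XiHat (G : CFG N A) (a1 ad : A) : Set N :=
  {Y | (∃ w ∈ Lang G Y, ∃ v, w = a1 :: v) ∧ (∃ w ∈ Lang G Y, ∃ v, w = v ++ [ad])}

/-- the grammar `G^♯` (here `S = Ξ̂`, and `Ξ̌` is its complement) -/
def GSharp (G : CFG N A) (S : Set N) : CFG N A :=
  ⟨{p | p ∈ G.prods ∧ p.1 ∉ S} ∪
   {p | p ∈ G.prods ∧ p.1 ∈ S ∧ ∃ (u : Word N A) (Xr : N) (v : Word N A),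
      Xr ∈ S ∧ p.2 = u ++ [Sum.inl Xr] ++ v}⟩

/-- the grammar `G_{i,w}` for a pivot production `piv` (here `S = Ξ̂`) -/
def GPivot (G : CFG N A) (S : Set N) (piv : CProd N A) : CFG N A :=
  ⟨{p | p ∈ G.prods ∧ p.1 ∉ S} ∪ {piv}⟩

/-- `G` is reduced for `X` -/
def Reduced (G : CFG N A) (X : N) : Prop :=
  ∀ Y : N, Y ≠ X → (LKY G ⊤ X (some Y)).Nonempty ∧ (Lang G Y).Nonempty

/-- `a₁* ⋯ a_d*` (given by the list `as`) is the minimal strict letter-bounded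
expression for `L_X(G)` -/
def MinimalLB (G : CFG N A) (X : N) (as : List A) : Prop :=
  Lang G X ⊆ letterLang as ∧ ∀ i < as.length, ¬ (Lang G X ⊆ letterLang (as.eraseIdx i))

/-- a symbol of `A ∪ {ε}` as a word -/
def optT (a : Option A) : Word N A := a.elim [] (fun x => [Sum.inr x])

/-- a symbol of `Ξ ∪ {ε}` as a word -/
def optN (y : Option N) : Word N A := y.elim [] (fun x => [Sum.inl x])

/-- `y ⇒^γ u_y` is a (possibly empty) `k`-index depth-first derivation, where
`y ∈ Ξ ∪ {ε}`; for `y = ε` the derivation is empty -/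
def optDFDer (H : CFG N A) (k : ℕ) (y : Option N) (γ : List (CProd N A)) : Prop :=
  match y with
  | some Y => ∃ w : List A, DFCtrlFrom H (k : ℕ∞) [Sum.inl Y] γ (tw w)
  | none => γ = []

/-- the grammar `G_k` with productions `X_i → X_{i-1} X_{i-1}` (1 ≤ i ≤ k) and `X_0 → a` -/
def Gk (k : ℕ) : CFG ℕ Unit :=
  ⟨{p | (∃ i, 1 ≤ i ∧ i ≤ k ∧ p = (i, [Sum.inl (i - 1), Sum.inl (i - 1)])) ∨
        p = (0, [Sum.inr ()])}⟩

end Paper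

/-!
Read the right-hand side of a production of `G^∩` with head `[q X q']` as a walk of `G^b`
from `q` to `q'`: a terminal is a transition, a nonterminal `[m Y m']` a jump from `m` to `m'`.
Its image under `ι` keeps the jumps and replaces each transition into the first state of a
block by the letter `a_s` of the block `s` being left. Every state of `G^b` reads a single
letter and, unless it ends its block, has a single successor; so between two events recorded
by `ι` the walk just advances inside a block, and the walk is recovered from its endpoints and
its image. For a terminal right-hand side `ab` (2NF excludes longer ones) `ι` is computed from
a chosen run `q → a·m → b·q'`, which is still a walk reading `ab`.
-/

namespace Paper

variable {N T : Type} {ws : List (List T)}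

abbrev StepB (ws : List (List T)) (q : QB) (a : T) (m : QB) : Prop :=
  ((q, [Sum.inr a, Sum.inl m]) : CProd QB T) ∈ DeltaB ws

lemma rhs_eq_nil_or_step {p : CProd QB T} (hp : p ∈ DeltaB ws) :
    p.2 = [] ∨ ∃ a m, StepB ws p.1 a m ∧ p.2 = [Sum.inr a, Sum.inl m] := by
  rcases id hp with ⟨s, i, a, -, -, -, rfl⟩ | ⟨s, s', a, -, -, -, rfl⟩ | ⟨s, -, rfl⟩
  · exact Or.inr ⟨_, _, hp, rfl⟩
  · exact Or.inr ⟨_, _, hp, rfl⟩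
  · exact Or.inl rfl

namespace StepB

variable {q m : QB} {a : T}

lemma letterB_eq (h : StepB ws q a m) : letterB ws q.1 q.2 = some a := by
  rcases h with ⟨s, i, b, -, -, hl, he⟩ | ⟨s, s', b, -, -, hl, he⟩ | ⟨s, -, he⟩
  · simp only [Prod.mk.injEq, List.cons.injEq, Sum.inr.injEq] at he
    obtain ⟨rfl, rfl, -⟩ := he
    exact hl
  · simp only [Prod.mk.injEq, List.cons.injEq, Sum.inr.injEq] at he
    obtain ⟨rfl, rfl, -⟩ := he
    exact hl
  · simp at he

lemma snd_lt_lenB (h : StepB ws q a m) : q.2 < lenB ws q.1 :=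
  (List.getElem?_eq_some_iff.1 h.letterB_eq).1

lemma target (h : StepB ws q a m) :
    (q.2 + 1 < lenB ws q.1 ∧ m = (q.1, q.2 + 1)) ∨ (lenB ws q.1 ≤ q.2 + 1 ∧ m.2 = 0) := by
  have := h.snd_lt_lenB
  rcases h with ⟨s, i, b, -, hi, -, he⟩ | ⟨s, s', b, -, -, -, he⟩ | ⟨s, -, he⟩
  · simp only [Prod.mk.injEq, List.cons.injEq, Sum.inl.injEq] at he
    obtain ⟨rfl, -, rfl, -⟩ := he
    exact Or.inl ⟨hi, rfl⟩
  · simp only [Prod.mk.injEq, List.cons.injEq, Sum.inl.injEq] at he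
    obtain ⟨rfl, -, rfl, -⟩ := he
    exact Or.inr ⟨by dsimp only at this ⊢; omega, rfl⟩
  · simp at he

lemma snd_eq_zero_iff (h : StepB ws q a m) : m.2 = 0 ↔ lenB ws q.1 ≤ q.2 + 1 := by
  rcases h.target with ⟨hlt, rfl⟩ | ⟨hge, h0⟩
  · dsimp only
    omega
  · exact iff_of_true h0 hge

lemma eq_of_lt (h : StepB ws q a m) (hlt : q.2 + 1 < lenB ws q.1) : m = (q.1, q.2 + 1) := by
  rcases h.target with ⟨-, rfl⟩ | ⟨hge, -⟩
  · rfl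
  · omega

lemma eq_of_snd_ne_zero (h : StepB ws q a m) (hm : m.2 ≠ 0) : m = (q.1, q.2 + 1) :=
  h.eq_of_lt (by have := h.snd_eq_zero_iff; omega)

end StepB

inductive RunB (ws : List (List T)) : QB → List T → QB → Prop
  | refl (q : QB) : RunB ws q [] q
  | step {q m q' : QB} {a : T} {w : List T} :
      StepB ws q a m → RunB ws m w q' → RunB ws q (a :: w) q'

lemma KSeq.eq_of_terminal {G : CFG N T} {k : ℕ∞} {u : List T} {γjs : List (CProd N T × ℕ)}
    {v : Word N T} (h : KSeq G k (tw u) γjs v) : v = tw u := by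
  cases h with
  | refl => rfl
  | step _ _ hget => simp [tw] at hget

lemma getElem?_tw_append_singleton {u : List T} {q x : N} {j : ℕ}
    (h : (tw u ++ [Sum.inl q])[j]? = some (Sum.inl x)) : j = u.length ∧ x = q := by
  rw [List.getElem?_append] at h
  split_ifs at h with hj
  · simp [tw] at h
  · simp only [tw, List.length_map, List.getElem?_singleton] at h hj
    split_ifs at h with hj'
    simp only [Option.some.injEq, Sum.inl.injEq] at h
    exact ⟨by omega, h.symm⟩

lemma applyProd_tw_append_singleton (p : CProd N T) (u : List T) (q : N) :
    applyProd p u.length (tw u ++ [Sum.inl q]) = tw u ++ p.2 := by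
  simp [applyProd, tw]

lemma KSeq.runB {u₀ v : Word QB T} {γjs : List (CProd QB T × ℕ)}
    (h : KSeq (GB ws) ⊤ u₀ γjs v)
    {u w : List T} {q q' : QB} (hu : u₀ = tw u ++ [Sum.inl q]) (hv : v = tw w ++ [Sum.inl q']) :
    ∃ w', w = u ++ w' ∧ RunB ws q w' q' := by
  induction h generalizing u q with
  | refl =>
    obtain ⟨hu, hq⟩ := List.append_inj' (hu.symm.trans hv) rfl
    refine ⟨[], ?_, ?_⟩
    · simpa using (List.map_injective_iff.2 Sum.inr_injective hu).symm
    · simp only [List.cons.injEq, Sum.inl.injEq] at hq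
      exact hq.1 ▸ .refl q
  | step _ hp hget hrest ih =>
    subst hu
    obtain ⟨rfl, hq⟩ := getElem?_tw_append_singleton hget
    rw [applyProd_tw_append_singleton] at hrest ih
    rcases rhs_eq_nil_or_step hp with hnil | ⟨a, m, hstep, hrhs⟩
    · rw [hnil, List.append_nil] at hrest
      have : (Sum.inl q' : QB ⊕ T) ∈ tw u := by simp [← hrest.eq_of_terminal, hv]
      simp [tw] at this
    · obtain ⟨w', rfl, hrun⟩ := ih (u := u ++ [a]) (q := m) (by simp [hrhs, tw]) hv
      exact ⟨a :: w', by simp, .step (hq ▸ hstep) hrun⟩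

lemma DerB.runB {q q' : QB} {w : List T} (h : DerB ws q w q') : RunB ws q w q' := by
  obtain ⟨γ, js, -, hseq⟩ := h
  simpa using KSeq.runB hseq (u := []) rfl rfl

/-- The right-hand side `r` of a production of `G^∩` read as a walk of `G^b` from `q` to `q'`,
together with its image `z` under `ι`. -/
inductive RhsPath (ws : List (List T)) : QB → Word (NI N) T → Word (NI N) ℕ → QB → Prop
  | nil (q : QB) : RhsPath ws q [] [] q
  | terminal {q m q' : QB} {a : T} {r : Word (NI N) T} {z : Word (NI N) ℕ} :
      StepB ws q a m → RhsPath ws m r z q' →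
      RhsPath ws q (Sum.inr a :: r) ((if m.2 = 0 then [Sum.inr q.1] else []) ++ z) q'
  | nonterminal {m m' q' : QB} {Y : N} {r : Word (NI N) T} {z : Word (NI N) ℕ} :
      RhsPath ws m' r z q' → RhsPath ws m (Sum.inl (m, Y, m') :: r) (Sum.inl (m, Y, m') :: z) q'

/-- The state from which a walk with image `z` ending in `q'` makes its first move recorded in
`z` (leaving its block, or a jump), or `q'` if there is none. -/
def exitState (ws : List (List T)) : Word (NI N) ℕ → QB → QB
  | [], q' => q'
  | Sum.inr s :: _, _ => (s, lenB ws s - 1)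
  | Sum.inl n :: _, _ => n.1

namespace RhsPath

variable {q q' : QB} {r : Word (NI N) T} {z : Word (NI N) ℕ}

lemma fst_eq_and_snd_le_exitState (h : RhsPath ws q r z q') :
    q.1 = (exitState ws z q').1 ∧ q.2 ≤ (exitState ws z q').2 := by
  induction h with
  | nil => simp [exitState]
  | @terminal q m _ _ _ z hstep _ ih =>
    have hlt := hstep.snd_lt_lenB
    by_cases hm : m.2 = 0
    · simp only [hm, if_true, List.singleton_append, exitState]
      exact ⟨trivial, Nat.le_sub_one_of_lt hlt⟩
    · obtain rfl := hstep.eq_of_snd_ne_zero hm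
      simp only [hm, if_false, List.nil_append]
      exact ⟨ih.1, by omega⟩
  | nonterminal => simp [exitState]

lemma exitState_ne_of_terminal {m : QB} {a : T} (hstep : StepB ws q a m)
    (h : RhsPath ws m r z q') (hm : m.2 ≠ 0) : exitState ws z q' ≠ q := by
  have hle := h.fst_eq_and_snd_le_exitState
  rw [hstep.eq_of_snd_ne_zero hm] at hle
  intro heq
  rw [heq] at hle
  omega

lemma terminal_image_ne_nil {m : QB} {a : T} (hstep : StepB ws q a m) (h : RhsPath ws m r z q) :
    (if m.2 = 0 then [Sum.inr q.1] else []) ++ z ≠ [] := by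
  intro hz
  by_cases hm : m.2 = 0
  · simp [hm] at hz
  · simp only [hm, if_false, List.nil_append] at hz
    subst hz
    exact h.exitState_ne_of_terminal hstep hm rfl

lemma terminal_image_ne_cons_inl {m m' : QB} {a : T} {Y : N} {zs : Word (NI N) ℕ}
    (hstep : StepB ws q a m) (h : RhsPath ws m r z q') :
    (if m.2 = 0 then [Sum.inr q.1] else []) ++ z ≠ Sum.inl (q, Y, m') :: zs := by
  intro hz
  by_cases hm : m.2 = 0
  · simp [hm] at hz
  · simp only [hm, if_false, List.nil_append] at hz
    subst hz
    exact h.exitState_ne_of_terminal hstep hm rfl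

theorem eq_of_image_eq {r₁ r₂ : Word (NI N) T} {z₁ z₂ : Word (NI N) ℕ}
    (h₁ : RhsPath ws q r₁ z₁ q') (h₂ : RhsPath ws q r₂ z₂ q') (hz : z₁ = z₂) :
    r₁ = r₂ := by
  induction h₁ generalizing r₂ z₂ with
  | nil q =>
    cases h₂ with
    | nil => rfl
    | terminal hstep h₂ => exact absurd hz.symm (terminal_image_ne_nil hstep h₂)
    | nonterminal => cases hz
  | @terminal q m₁ q' a r₁ z₁ hstep₁ h₁ ih =>
    cases h₂ with
    | nil => exact absurd hz (terminal_image_ne_nil hstep₁ h₁)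
    | @terminal _ m₂ _ b r₂ z₂ hstep₂ h₂ =>
      obtain rfl : a = b :=
        Option.some.inj (hstep₁.letterB_eq.symm.trans hstep₂.letterB_eq)
      by_cases hm₁ : m₁.2 = 0
      · have hm₂ : m₂.2 = 0 := by rwa [hstep₂.snd_eq_zero_iff, ← hstep₁.snd_eq_zero_iff]
        simp only [hm₁, hm₂, if_true, List.singleton_append, List.cons.injEq, true_and] at hz
        obtain rfl : m₁ = m₂ := by
          refine Prod.ext ?_ (hm₁.trans hm₂.symm)
          rw [h₁.fst_eq_and_snd_le_exitState.1, h₂.fst_eq_and_snd_le_exitState.1, hz]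
        rw [ih h₂ hz]
      · have hm₂ : m₂.2 ≠ 0 := by
          rwa [ne_eq, hstep₂.snd_eq_zero_iff, ← hstep₁.snd_eq_zero_iff]
        simp only [hm₁, hm₂, if_false, List.nil_append] at hz
        obtain rfl : m₁ = m₂ :=
          (hstep₁.eq_of_snd_ne_zero hm₁).trans (hstep₂.eq_of_snd_ne_zero hm₂).symm
        rw [ih h₂ hz]
    | nonterminal => exact absurd hz (terminal_image_ne_cons_inl hstep₁ h₁)
  | nonterminal h₁ ih =>
    cases h₂ with
    | nil => cases hz
    | terminal hstep h₂ => exact absurd hz.symm (terminal_image_ne_cons_inl hstep h₂)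
    | nonterminal h₂ =>
      simp only [List.cons.injEq, Sum.inl.injEq, Prod.mk.injEq, true_and] at hz
      obtain ⟨⟨rfl, rfl⟩, hz⟩ := hz
      rw [ih h₂ hz]

end RhsPath

lemma StepB.iotaMid {q m q' : QB} {X : N} {a b : T} (h₁ : StepB ws q a m)
    (h₂ : StepB ws m b q') :
    StepB ws q a (iotaMid ws (q, X, q') a b) ∧ StepB ws (iotaMid ws (q, X, q') a b) b q' := by
  unfold Paper.iotaMid
  dsimp only
  split_ifs with hlt
  · rw [← h₁.eq_of_lt hlt]
    exact ⟨h₁, h₂⟩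
  · have hm : m = (m.1, 0) := Prod.ext rfl (h₁.snd_eq_zero_iff.2 (by omega))
    exact Nat.sInf_mem (s := {y | StepB ws q a (y, 0) ∧ StepB ws (y, 0) b q'})
      ⟨m.1, hm ▸ h₁, hm ▸ h₂⟩

lemma RunB.rhsPath {q q' : QB} {X : N} {w : List T} (h : RunB ws q w q') (hw : w.length ≤ 2) :
    RhsPath ws q (tw w) (iotaRhs ws (q, X, q') (tw w)) q' := by
  match w, h with
  | [], .refl _ => exact .nil q
  | [a], .step h₁ (.refl _) => simpa [tw, iotaRhs] using RhsPath.terminal h₁ (.nil q')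
  | [a, b], .step h₁ (.step h₂ (.refl _)) =>
    obtain ⟨h₁', h₂'⟩ := h₁.iotaMid (X := X) h₂
    simpa [tw, iotaRhs] using RhsPath.terminal h₁' (.terminal h₂' (.nil q'))
  | _ :: _ :: _ :: _, _ => simp at hw

lemma rhsPath_of_mem_deltaI {G : CFG N T} (h2NF : TwoNF G) {p : CProd (NI N) T}
    (hp : p ∈ DeltaI G ws) : RhsPath ws p.1.1 p.2 (iota ws p).2 p.1.2.2 := by
  obtain ⟨q, q', X, -, ⟨w, hG, hD, rfl⟩ | ⟨Y, -, rfl⟩ | ⟨a, Y, m, -, hB, -, rfl⟩ |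
    ⟨a, Y, m, -, hB, -, rfl⟩ | ⟨Y, Z, m, -, -, -, rfl⟩⟩ := hp
  · exact hD.runB.rhsPath (by simpa [tw] using h2NF _ hG)
  · exact .nonterminal (.nil q')
  · exact .terminal hB (.nonterminal (.nil q'))
  · simpa [iota, iotaRhs] using RhsPath.nonterminal (Y := Y) (.terminal hB (.nil q'))
  · exact .nonterminal (.nonterminal (.nil q'))

lemma iota_injOn {G : CFG N T} (h2NF : TwoNF G) : Set.InjOn (iota ws) (DeltaI G ws) := by
  intro p₁ hp₁ p₂ hp₂ he
  have hhead : p₁.1 = p₂.1 := by simpa only [iota] using congrArg Prod.fst he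
  have h₂ := rhsPath_of_mem_deltaI h2NF hp₂
  rw [← hhead] at h₂
  exact Prod.ext hhead
    ((rhsPath_of_mem_deltaI h2NF hp₁).eq_of_image_eq h₂ (congrArg Prod.snd he))

theorem iota_preimage_singleton_general {N T : Type} (G : CFG N T) (h2NF : TwoNF G)
    (ws : List (List T))
    (p : CProd (NI N) ℕ) (hp : p ∈ (GBow G ws).prods) :
    ∃! p' : CProd (NI N) T, p' ∈ DeltaI G ws ∧ iota ws p' = p := by
  obtain ⟨p₀, hp₀, rfl⟩ := hp
  exact ⟨p₀, ⟨hp₀, rfl⟩, fun p₁ hp₁ => iota_injOn h2NF hp₁.1 hp₀ hp₁.2⟩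

/-- Proposition 1: for each production `p ∈ Δ^⋈`, the preimage
`ι⁻¹(p) ⊆ Δ^∩` is a singleton. -/
theorem iota_preimage_singleton {N T : Type} (G : CFG N T) (h2NF : TwoNF G)
    (ws : List (List T)) (hb : IsBExpr ws)
    (p : CProd (NI N) ℕ) (hp : p ∈ (GBow G ws).prods) :
    ∃! p' : CProd (NI N) T, p' ∈ DeltaI G ws ∧ iota ws p' = p :=
  iota_preimage_singleton_general G h2NF ws p hp

end Paper
end

section
/- Let a_1, …, a_d be pairwise distinct letters of an alphabet A and b̃ = a_1* … a_d* the corresponding strict letter-bounded language. If L_1, L_2 ⊆ b̃ are nonempty languages and L_1 · L_2 ⊆ a_ℓ* … a_r* for some 1 ≤ ℓ ≤ r ≤ d, then there exists q with ℓ ≤ q ≤ r such that L_1 ⊆ a_ℓ* … a_q* and L_2 ⊆ a_q* … a_r*. -/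
namespace Paper

/-!
A word of `a₁* ⋯ a_d*` reads its letters in the order of the list, and since the letters are
distinct, each letter occurrence pins down how far along the list the word has progressed. Take
`k` minimal with `L₁ ⊆ a₁* ⋯ a_{k+1}*`. If `k > 0`, some `u ∈ L₁` really uses the letter
`b = a_{k+1}`, so `u = u' b`; for every `v ∈ L₂` the word `u' b v` lies in `a₁* ⋯ a_d*`, and the
part `v` after this occurrence of `b` can only use `b` and later letters, so `v ∈ a_{k+1}* ⋯ a_d*`.
The theorem applies this to the segment `a_ℓ, …, a_r`.
-/

section LetterLang

variable {α : Type}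

theorem mem_letterLang_nil {w : List α} : w ∈ letterLang ([] : List α) ↔ w = [] := Iff.rfl

theorem mem_letterLang_cons {w : List α} {c : α} {cs : List α} :
    w ∈ letterLang (c :: cs) ↔ ∃ n, ∃ v ∈ letterLang cs, w = List.replicate n c ++ v := by
  simp [letterLang, BLang]

theorem nil_mem_letterLang (cs : List α) : [] ∈ letterLang cs := by
  induction cs with
  | nil => rfl
  | cons c cs ih => exact mem_letterLang_cons.mpr ⟨0, [], ih, rfl⟩

theorem mem_letterLang_singleton {w : List α} {b : α} :
    w ∈ letterLang [b] ↔ ∃ n, w = List.replicate n b := by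
  simp [mem_letterLang_cons, mem_letterLang_nil]

theorem mem_letterLang_append {w cs ds : List α} :
    w ∈ letterLang (cs ++ ds) ↔ ∃ u ∈ letterLang cs, ∃ v ∈ letterLang ds, w = u ++ v := by
  induction cs generalizing w with
  | nil => simp [mem_letterLang_nil]
  | cons c cs ih =>
    simp only [List.cons_append, mem_letterLang_cons, ih]
    constructor
    · rintro ⟨n, _, ⟨u, hu, v, hv, rfl⟩, rfl⟩
      exact ⟨_, ⟨n, u, hu, rfl⟩, v, hv, by simp⟩
    · rintro ⟨_, ⟨n, u, hu, rfl⟩, v, hv, rfl⟩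
      exact ⟨n, _, ⟨u, hu, v, hv, rfl⟩, by simp⟩

theorem mem_of_mem_letterLang {w cs : List α} {a : α} (hw : w ∈ letterLang cs) (ha : a ∈ w) :
    a ∈ cs := by
  induction cs generalizing w with
  | nil => simp_all [mem_letterLang_nil]
  | cons c cs ih =>
    obtain ⟨n, v, hv, rfl⟩ := mem_letterLang_cons.mp hw
    rcases List.mem_append.mp ha with ha | ha
    · exact List.eq_of_mem_replicate ha ▸ List.mem_cons_self
    · exact List.mem_cons_of_mem _ (ih hv ha)

theorem mem_letterLang_of_append {x y cs : List α} (h : x ++ y ∈ letterLang cs) :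
    x ∈ letterLang cs ∧ y ∈ letterLang cs := by
  induction cs generalizing x y with
  | nil => simp_all [mem_letterLang_nil]
  | cons c cs ih =>
    obtain ⟨n, w, hw, hxy⟩ := mem_letterLang_cons.mp h
    rcases List.append_eq_append_iff.mp hxy with ⟨t, hxt, rfl⟩ | ⟨t, rfl, rfl⟩
    · obtain ⟨-, hx, ht⟩ := List.append_eq_replicate_iff.mp hxt.symm
      exact ⟨mem_letterLang_cons.mpr ⟨x.length, [], nil_mem_letterLang cs, by simpa using hx⟩,
        mem_letterLang_cons.mpr ⟨t.length, w, hw, by rw [← ht]⟩⟩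
    · obtain ⟨ht, hy⟩ := ih hw
      exact ⟨mem_letterLang_cons.mpr ⟨n, t, ht, rfl⟩, mem_letterLang_cons.mpr ⟨0, y, hy, rfl⟩⟩

theorem mem_letterLang_drop_of_append_cons {bs x v : List α} {k : ℕ} {b : α} (hbs : bs.Nodup)
    (hb : bs[k]? = some b) (h : x ++ b :: v ∈ letterLang bs) : v ∈ letterLang (bs.drop k) := by
  rw [← List.take_append_drop k bs, mem_letterLang_append] at h
  obtain ⟨y, hy, z, hz, hyz⟩ := h
  have hb_drop : b ∈ bs.drop k := List.mem_of_getElem? (by rwa [List.getElem?_drop, Nat.add_zero])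
  have hb_y : b ∉ y := fun hby =>
    List.disjoint_take_drop hbs le_rfl (mem_of_mem_letterLang hy hby) hb_drop
  rcases List.append_eq_append_iff.mp hyz with ⟨t, rfl, ht⟩ | ⟨t, rfl, rfl⟩
  · cases t with
    | nil =>
      rw [List.nil_append] at ht
      subst ht
      exact (mem_letterLang_of_append (x := [b]) hz).2
    | cons c t =>
      obtain ⟨rfl, -⟩ := List.cons_eq_cons.mp ht
      exact absurd (by simp) hb_y
  · exact (mem_letterLang_of_append (x := t ++ [b]) (by simpa using hz)).2

theorem exists_letterLang_take_drop_of_append_mem {bs : List α} (hbs : bs.Nodup)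
    {L1 L2 : Set (List α)} (h1 : L1.Nonempty) (h2 : L2.Nonempty)
    (hcat : ∀ u ∈ L1, ∀ v ∈ L2, u ++ v ∈ letterLang bs) :
    ∃ k ≤ bs.length - 1, L1 ⊆ letterLang (bs.take (k + 1)) ∧ L2 ⊆ letterLang (bs.drop k) := by
  classical
  obtain ⟨u₀, hu₀⟩ := h1
  obtain ⟨v₀, hv₀⟩ := h2
  have hall : L1 ⊆ letterLang (bs.take (bs.length - 1 + 1)) := fun u hu => by
    rw [List.take_of_length_le (by omega)]
    exact (mem_letterLang_of_append (hcat u hu v₀ hv₀)).1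
  have hex : ∃ k, L1 ⊆ letterLang (bs.take (k + 1)) := ⟨_, hall⟩
  have hbound := Nat.find_min' hex hall
  refine ⟨Nat.find hex, hbound, Nat.find_spec hex, fun v hv => ?_⟩
  cases hk : Nat.find hex with
  | zero => exact (mem_letterLang_of_append (hcat u₀ hu₀ v hv)).2
  | succ j =>
    have hj : j + 1 < bs.length := by omega
    obtain ⟨u, hu, hu_short⟩ :=
      Set.not_subset.mp (Nat.find_min hex (show j < Nat.find hex by omega))
    have hspec := Nat.find_spec hex
    rw [hk, List.take_succ_eq_append_getElem hj] at hspec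
    obtain ⟨u', hu', w, hw, rfl⟩ := mem_letterLang_append.mp (hspec hu)
    obtain ⟨n, rfl⟩ := mem_letterLang_singleton.mp hw
    obtain ⟨m, rfl⟩ : ∃ m, n = m + 1 := Nat.exists_eq_add_one.mpr <|
      Nat.pos_of_ne_zero (by rintro rfl; exact hu_short (by simpa using hu'))
    refine mem_letterLang_drop_of_append_cons hbs (List.getElem?_eq_getElem hj)
      (x := u' ++ List.replicate m bs[j + 1]) ?_
    simpa [List.replicate_succ'] using hcat _ hu v hv

end LetterLang

theorem concat_letter_bounded_split_general {A : Type} (as : List A) (hstrict : as.Nodup)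
    (L1 L2 : Set (List A)) (h1 : L1.Nonempty) (h2 : L2.Nonempty)
    (l r : ℕ) (hlr : l ≤ r)
    (hcat : {w | ∃ u ∈ L1, ∃ v ∈ L2, w = u ++ v} ⊆ segLang as l r) :
    ∃ q : ℕ, l ≤ q ∧ q ≤ r ∧ L1 ⊆ segLang as l q ∧ L2 ⊆ segLang as q r := by
  set bs := (as.drop l).take (r - l + 1)
  have hbs : bs.Nodup := ((as.drop l).take_sublist _).nodup ((as.drop_sublist l).nodup hstrict)
  obtain ⟨k, hk, hL1, hL2⟩ := exists_letterLang_take_drop_of_append_mem hbs h1 h2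
    fun u hu v hv => hcat ⟨u, hu, v, hv, rfl⟩
  have hkr : k ≤ r - l := hk.trans (by simp [bs])
  refine ⟨l + k, by omega, by omega, ?_, ?_⟩
  · have hseg : segLang as l (l + k) = letterLang (bs.take (k + 1)) := by
      rw [segLang, List.take_take]
      congr 3
      omega
    rwa [hseg]
  · have hseg : segLang as (l + k) r = letterLang (bs.drop k) := by
      rw [segLang, List.drop_take, List.drop_drop]
      congr 3
      omega
    rwa [hseg]

/-- fact (v) in the proof of Lemma 3: if `L₁, L₂` are nonempty
subsets of the strict letter-bounded language `a₁* ⋯ a_d*` (given by the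
duplicate-free list `as`) and `L₁·L₂ ⊆ a_ℓ* ⋯ a_r*` (0-indexed segment `l..r`),
then there is `q` with `l ≤ q ≤ r`, `L₁ ⊆ a_ℓ* ⋯ a_q*` and `L₂ ⊆ a_q* ⋯ a_r*`. -/
theorem concat_letter_bounded_split {A : Type} (as : List A) (hstrict : as.Nodup)
    (L1 L2 : Set (List A)) (h1 : L1.Nonempty) (h2 : L2.Nonempty)
    (hb1 : L1 ⊆ letterLang as) (hb2 : L2 ⊆ letterLang as)
    (l r : ℕ) (hlr : l ≤ r) (hr : r < as.length)
    (hcat : {w | ∃ u ∈ L1, ∃ v ∈ L2, w = u ++ v} ⊆ segLang as l r) :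
    ∃ q : ℕ, l ≤ q ∧ q ≤ r ∧ L1 ⊆ segLang as l q ∧ L2 ⊆ segLang as q r :=
  concat_letter_bounded_split_general as hstrict L1 L2 h1 h2 l r hlr hcat

end Paper
end
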